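/- (Measurable section theorem on ℝ+.) Let (Ω, F, P) be a complete probability space and A ∈ F ⊗ B(ℝ+). Then there exists an F-measurable random variable T : Ω → [0, ∞] such that (ω, T(ω)) ∈ A for every ω with T(ω) < ∞, and { ω : T(ω) < ∞ } = π_Ω(A). -/

import Mathlib

/-!
A set in `F ⊗ B(ℝ≥0)` involves only countably many sets of `F`, so it is the preimage of a Borel
set `A' ⊆ (ℕ → Bool) × ℝ≥0` under `φ × id` for some measurable `φ : Ω → ℕ → Bool`. The Borel set
`A'` is analytic, the continuous image of Baire space under some `f`; over each point `x` of its
projection select the second coordinate of `f u` for the lexicographically least `u` with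
`(f u).1 = x`. Each coordinate of that least `u` is determined by countably many Boolean
operations on analytic sets, and analytic sets are measurable for the completion of every finite
measure (Choquet: they are approximated from inside by compact sets). Completeness of `P` then
makes the preimages under `φ` measurable.
-/

open MeasureTheory Set Filter Topology
open scoped ENNReal NNReal

theorem Continuous.mem_image_of_forall_mem_closure_image_le {X : Type*} [TopologicalSpace X]
    [T2Space X] {f : (ℕ → ℕ) → X} (hf : Continuous f) {k : ℕ → ℕ} {y : X}
    (hy : ∀ n, y ∈ closure (f '' {u | ∀ i < n, u i ≤ k i})) :
    y ∈ f '' {u | ∀ i, u i ≤ k i} := by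
  set B : ℕ → Set (ℕ → ℕ) := fun n => {u | ∀ i < n, u i ≤ k i}
  have hB : Antitone B := fun m n hmn u hu i hi => hu i (hi.trans_le hmn)
  have hcluster : MapClusterPt y (⨅ n, 𝓟 (B n)) f := by
    refine clusterPt_iff_forall_mem_closure.2 fun s hs => ?_
    obtain ⟨n, -, hn⟩ := (hasBasis_iInf_principal hB.directed_ge).mem_iff.1 (mem_map.1 hs)
    exact closure_mono (image_subset_iff.2 hn) (hy n)
  obtain ⟨U, hUB, hUy⟩ := mapClusterPt_iff_ultrafilter.1 hcluster
  have hUi : ∀ i, ∃ a ≤ k i, U.map (fun u => u i) = pure a := fun i =>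
    Ultrafilter.eq_pure_of_finite_mem (finite_Iic (k i))
      (hUB (mem_iInf_of_mem (i + 1) (mem_principal.2 fun u hu => hu i i.lt_succ_self)))
  choose a hak haU using hUi
  have hUa : Tendsto id (U : Filter (ℕ → ℕ)) (𝓝 a) := tendsto_pi_nhds.2 fun i => by
    change Tendsto (fun u : ℕ → ℕ => u i) (U : Filter (ℕ → ℕ)) _
    rw [Tendsto, ← Ultrafilter.coe_map, haU i]
    exact pure_le_nhds (a i)
  exact ⟨a, hak, tendsto_nhds_unique ((hf.tendsto a).comp hUa) hUy⟩

theorem exists_lt_measure_image_inter_le {X : Type*} [MeasurableSpace X] {μ : Measure X}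
    {f : (ℕ → ℕ) → X} {L : Set (ℕ → ℕ)} {r : ℝ≥0∞} (hr : r < μ (f '' L)) (n : ℕ) :
    ∃ m, r < μ (f '' (L ∩ {u | u n ≤ m})) := by
  have hmono : Monotone fun m => f '' (L ∩ {u | u n ≤ m}) := fun m m' hm =>
    image_mono (inter_subset_inter_right _ fun u hu => le_trans hu hm)
  have hunion : ⋃ m, f '' (L ∩ {u | u n ≤ m}) = f '' L := by
    rw [← image_iUnion, ← inter_iUnion,
      iUnion_eq_univ_iff.2 fun u => ⟨u n, (le_rfl : u n ≤ u n)⟩, inter_univ]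
  -- continuity from below holds for the outer measure `μ` on arbitrary sets
  rwa [← hunion, hmono.measure_iUnion, lt_iSup_iff] at hr

theorem exists_forall_lt_measure_image_le {X : Type*} [MeasurableSpace X] {μ : Measure X}
    {f : (ℕ → ℕ) → X} {r : ℝ≥0∞} (hr : r < μ (range f)) :
    ∃ k : ℕ → ℕ, ∀ n, r < μ (f '' {u | ∀ i < n, u i ≤ k i}) := by
  have step : ∀ n (L : Set (ℕ → ℕ)), ∃ m,
      r < μ (f '' L) → r < μ (f '' (L ∩ {u | u n ≤ m})) := by
    intro n L
    by_cases hL : r < μ (f '' L)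
    · obtain ⟨m, hm⟩ := exists_lt_measure_image_inter_le hL n
      exact ⟨m, fun _ => hm⟩
    · exact ⟨0, fun h => absurd h hL⟩
  choose m hm using step
  let L : ℕ → Set (ℕ → ℕ) := fun n => Nat.rec univ (fun n Ln => Ln ∩ {u | u n ≤ m n Ln}) n
  have hL : ∀ n, L n = {u | ∀ i < n, u i ≤ m i (L i)} := by
    intro n
    induction n with
    | zero => simp [L]
    | succ n ih =>
      ext u
      simp only [L, mem_inter_iff, mem_ofPred_eq, Nat.lt_succ_iff_lt_or_eq, or_imp, forall_and,
        forall_eq] at ih ⊢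
      rw [ih]
      rfl
  refine ⟨fun i => m i (L i), fun n => ?_⟩
  rw [← hL]
  induction n with
  | zero => simpa [L] using hr
  | succ n ih => exact hm n (L n) ih

theorem exists_isCompact_subset_range_le_measure {X : Type*} [TopologicalSpace X] [T2Space X]
    [MeasurableSpace X] [OpensMeasurableSpace X] {μ : Measure X} [IsFiniteMeasure μ]
    {f : (ℕ → ℕ) → X} (hf : Continuous f) {r : ℝ≥0∞}
    (hr : r < μ (range f)) : ∃ K ⊆ range f, IsCompact K ∧ r ≤ μ K := by
  obtain ⟨k, hk⟩ := exists_forall_lt_measure_image_le hr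
  let L (n : ℕ) : Set (ℕ → ℕ) := {u | ∀ i < n, u i ≤ k i}
  have hLanti : Antitone fun n => closure (f '' L n) := fun m n hmn =>
    closure_mono (image_mono fun u hu i hi => hu i (hi.trans_le hmn))
  refine ⟨f '' {u | ∀ i, u i ≤ k i}, image_subset_range _ _, ?_, ?_⟩
  · have hK : {u : ℕ → ℕ | ∀ i, u i ≤ k i} = univ.pi fun i => Iic (k i) := by
      ext u; simp only [mem_univ_pi, mem_Iic, mem_ofPred_eq]
    rw [hK]
    exact (isCompact_univ_pi fun i => (finite_Iic _).isCompact).image hf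
  calc r ≤ ⨅ n, μ (closure (f '' L n)) :=
        le_iInf fun n => (hk n).le.trans (measure_mono subset_closure)
    _ = μ (⋂ n, closure (f '' L n)) :=
        (hLanti.measure_iInter (fun n => isClosed_closure.nullMeasurableSet)
          ⟨0, measure_ne_top μ _⟩).symm
    _ ≤ μ (f '' {u | ∀ i, u i ≤ k i}) :=
        measure_mono fun y hy => hf.mem_image_of_forall_mem_closure_image_le (mem_iInter.1 hy)

theorem MeasureTheory.AnalyticSet.nullMeasurableSet {X : Type*} [TopologicalSpace X] [T2Space X]
    [MeasurableSpace X] [OpensMeasurableSpace X] (μ : Measure X) [IsFiniteMeasure μ]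
    {s : Set X} (hs : AnalyticSet s) : NullMeasurableSet s μ := by
  rw [AnalyticSet] at hs
  rcases hs with rfl | ⟨f, hf, rfl⟩
  · exact .empty
  rcases eq_or_ne (μ (range f)) 0 with h0 | h0
  · exact .of_null h0
  obtain ⟨r, -, hr, hr_lim⟩ := exists_seq_strictMono_tendsto' (pos_iff_ne_zero.2 h0)
  choose K hKs hK hrK using fun n => exists_isCompact_subset_range_le_measure hf (hr n).2
  have hKm : MeasurableSet (⋃ n, K n) := .iUnion fun n => (hK n).isClosed.measurableSet
  have hle : μ (range f) ≤ μ (⋃ n, K n) :=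
    le_of_tendsto' hr_lim fun n => (hrK n).trans (measure_mono (subset_iUnion K n))
  exact hKm.nullMeasurableSet.congr
    (ae_eq_of_subset_of_measure_ge (iUnion_subset hKs) hle hKm.nullMeasurableSet
      (measure_ne_top μ _))

theorem MeasureTheory.AnalyticSet.measurableSet_preimage {Ω X : Type*} [MeasurableSpace Ω]
    [TopologicalSpace X] [T2Space X] [MeasurableSpace X] [OpensMeasurableSpace X]
    (P : Measure Ω) [IsFiniteMeasure P] [P.IsComplete] {φ : Ω → X} (hφ : Measurable φ)
    {s : Set X} (hs : AnalyticSet s) : MeasurableSet (φ ⁻¹' s) :=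
  ((hs.nullMeasurableSet (P.map φ)).preimage (hφ.quasiMeasurePreserving P)).measurable_of_complete

/-- The lexicographically least element of `C`, chosen coordinate by coordinate; it lies in `C`
when `C` is closed and nonempty, and `lexMin ∅ = 0`. -/
noncomputable def lexMin (C : Set (ℕ → ℕ)) : ℕ → ℕ
  | n => sInf {k | ∃ u ∈ C, (∀ i, (_ : i < n) → u i = lexMin C i) ∧ u n = k}
termination_by n => n

theorem lexMin_apply (C : Set (ℕ → ℕ)) (n : ℕ) :
    lexMin C n = sInf {k | ∃ u ∈ C, (∀ i < n, u i = lexMin C i) ∧ u n = k} := by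
  rw [lexMin]

theorem exists_mem_forall_le_eq_lexMin {C : Set (ℕ → ℕ)} (hC : C.Nonempty) :
    ∀ n, ∃ u ∈ C, ∀ i ≤ n, u i = lexMin C i
  | n => by
    obtain ⟨u, hu, hun⟩ : ∃ u ∈ C, ∀ i < n, u i = lexMin C i := by
      cases n with
      | zero => exact hC.imp fun u hu => ⟨hu, fun i hi => absurd hi i.not_lt_zero⟩
      | succ n =>
        obtain ⟨u, hu, hun⟩ := exists_mem_forall_le_eq_lexMin hC n
        exact ⟨u, hu, fun i hi => hun i (Nat.lt_succ_iff.1 hi)⟩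
    have hne : {k | ∃ u ∈ C, (∀ i < n, u i = lexMin C i) ∧ u n = k}.Nonempty :=
      ⟨u n, u, hu, hun, rfl⟩
    obtain ⟨v, hv, hvn, hv_eq⟩ := Nat.sInf_mem hne
    rw [← lexMin_apply] at hv_eq
    exact ⟨v, hv, fun i hi => hi.lt_or_eq.elim (hvn i) fun hin => hin ▸ hv_eq⟩

theorem lexMin_le_iff {C : Set (ℕ → ℕ)} (hC : C.Nonempty) {n k : ℕ} :
    lexMin C n ≤ k ↔ ∃ u ∈ C, (∀ i < n, u i = lexMin C i) ∧ u n ≤ k := by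
  constructor
  · obtain ⟨v, hv, hvn⟩ := exists_mem_forall_le_eq_lexMin hC n
    exact fun hk => ⟨v, hv, fun i hi => hvn i hi.le, (hvn n le_rfl).trans_le hk⟩
  · rintro ⟨u, hu, hun, hk⟩
    rw [lexMin_apply]
    exact le_trans (Nat.sInf_le (m := u n) ⟨u, hu, hun, rfl⟩) hk

theorem lexMin_mem {C : Set (ℕ → ℕ)} (hC : IsClosed C) (hne : C.Nonempty) : lexMin C ∈ C := by
  choose u hu hpre using exists_mem_forall_le_eq_lexMin hne
  have hlim : Tendsto u atTop (𝓝 (lexMin C)) := tendsto_pi_nhds.2 fun i =>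
    tendsto_const_nhds.congr' <| (eventually_ge_atTop i).mono fun n hn => (hpre n i hn).symm
  exact hC.mem_of_tendsto hlim (.of_forall hu)

theorem measurable_lexMin {X : Type*} [MeasurableSpace X] {C : X → Set (ℕ → ℕ)}
    (hC : ∀ s, IsClosed s → MeasurableSet {x | (C x ∩ s).Nonempty}) :
    Measurable fun x => lexMin (C x) := by
  refine measurable_pi_lambda _ fun n => ?_
  induction n using Nat.strong_induction_on with
  | _ n ih =>
  refine measurable_of_Iic fun k => ?_
  let cyl (p : Fin n → ℕ) : Set (ℕ → ℕ) := (⋂ i : Fin n, {u | u i = p i}) ∩ {u | u n ≤ k}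
  have hcyl (p : Fin n → ℕ) : IsClosed (cyl p) :=
    (isClosed_iInter fun i => isClosed_eq (continuous_apply _) continuous_const).inter
      (isClosed_le (continuous_apply n) continuous_const)
  have hprefix (p : Fin n → ℕ) : MeasurableSet (⋂ i : Fin n, {x | lexMin (C x) i = p i}) :=
    .iInter fun i => ih i i.2 (measurableSet_singleton (p i))
  -- `lexMin (C x) n ≤ k` is decided by the prefix of `lexMin (C x)` below `n` and one closed set
  have hsplit : (fun x => lexMin (C x) n) ⁻¹' Iic k = {x | (C x ∩ univ).Nonempty}ᶜ ∪
      ⋃ p : Fin n → ℕ,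
        (⋂ i : Fin n, {x | lexMin (C x) i = p i}) ∩ {x | (C x ∩ cyl p).Nonempty} := by
    ext x
    rcases (C x).eq_empty_or_nonempty with hx | hx
    · have hzero : lexMin (C x) n = 0 := by rw [lexMin_apply, hx]; simp
      exact iff_of_true (by simp [hzero]) (Or.inl (by simp [hx]))
    simp only [mem_preimage, mem_Iic, lexMin_le_iff hx, inter_univ, mem_union, mem_compl_iff,
      mem_ofPred_eq, hx, not_true_eq_false, false_or, mem_iUnion, mem_inter_iff, mem_iInter, cyl]
    constructor
    · rintro ⟨u, hu, hun, hk⟩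
      exact ⟨fun i => lexMin (C x) i, fun i => rfl, u, hu, mem_iInter.2 fun i => hun i i.2, hk⟩
    · rintro ⟨p, hp, u, hu, hup, hk⟩
      exact ⟨u, hu, fun i hi => (mem_iInter.1 hup ⟨i, hi⟩).trans (hp ⟨i, hi⟩).symm, hk⟩
  rw [hsplit]
  exact (hC univ isClosed_univ).compl.union (.iUnion fun p => (hprefix p).inter (hC _ (hcyl p)))

theorem MeasurableSet.exists_eq_preimage_prodMap_cantor {Ω β : Type*} [MeasurableSpace Ω]
    [MeasurableSpace β] {A : Set (Ω × β)} (hA : MeasurableSet A) :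
    ∃ φ : Ω → ℕ → Bool, Measurable φ ∧
      ∃ A' : Set ((ℕ → Bool) × β), MeasurableSet A' ∧ A = Prod.map φ id ⁻¹' A' := by
  classical
  rw [← generateFrom_prod] at hA
  induction A, hA using MeasurableSpace.generateFrom_induction with
  | hC _ hrect =>
    obtain ⟨s, hs, t, ht, rfl⟩ := hrect
    refine ⟨fun ω _ => decide (ω ∈ s), measurable_pi_lambda _ fun _ => measurable_to_bool ?_,
      ((fun x : ℕ → Bool => x 0) ⁻¹' {true}) ×ˢ t,
      (measurable_pi_apply 0 (measurableSet_singleton _)).prod ht, ?_⟩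
    · simpa [preimage] using hs
    · ext ⟨ω, y⟩
      simp
  | empty => exact ⟨fun _ _ => false, measurable_const, ∅, .empty, rfl⟩
  | compl _ _ ih =>
    obtain ⟨φ, hφ, A', hA', rfl⟩ := ih
    exact ⟨φ, hφ, A'ᶜ, hA'.compl, rfl⟩
  | iUnion _ _ ih =>
    choose φ hφ A' hA' hs using ih
    let ψ (n : ℕ) (x : ℕ → Bool) : ℕ → Bool := fun m => x (Nat.pair n m)
    have hψ (n : ℕ) : Measurable (ψ n) := measurable_pi_lambda _ fun m => measurable_pi_apply _
    refine ⟨fun ω m => φ m.unpair.1 ω m.unpair.2,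
      measurable_pi_lambda _ fun m => (measurable_pi_apply _).comp (hφ _),
      ⋃ n, Prod.map (ψ n) id ⁻¹' A' n, .iUnion fun n => ((hψ n).prodMap measurable_id) (hA' n), ?_⟩
    ext ⟨ω, y⟩
    simp [hs, ψ]

theorem MeasureTheory.AnalyticSet.exists_measurable_selection {Ω X Y : Type*}
    [MeasurableSpace Ω] [TopologicalSpace X] [T2Space X] [MeasurableSpace X]
    [OpensMeasurableSpace X] [TopologicalSpace Y] [MeasurableSpace Y] [BorelSpace Y] [Nonempty Y]
    (P : Measure Ω) [IsFiniteMeasure P] [P.IsComplete] {φ : Ω → X} (hφ : Measurable φ)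
    {A : Set (X × Y)} (hA : AnalyticSet A) :
    ∃ τ : Ω → Y, Measurable τ ∧ ∀ ω, φ ω ∈ Prod.fst '' A → (φ ω, τ ω) ∈ A := by
  rw [AnalyticSet] at hA
  rcases hA with rfl | ⟨f, hf, rfl⟩
  · exact ⟨fun _ => Classical.arbitrary Y, measurable_const, by simp⟩
  let C (ω : Ω) : Set (ℕ → ℕ) := {u | (f u).1 = φ ω}
  have hC : ∀ s, IsClosed s → MeasurableSet {ω | (C ω ∩ s).Nonempty} := by
    intro s hs
    have hpre : {ω | (C ω ∩ s).Nonempty} = φ ⁻¹' ((fun u => (f u).1) '' s) := by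
      ext ω
      simp only [mem_ofPred_eq, mem_preimage, mem_image, C, Set.Nonempty, mem_inter_iff]
      exact exists_congr fun u => and_comm
    rw [hpre]
    exact (hs.analyticSet.image_of_continuous (continuous_fst.comp hf)).measurableSet_preimage
      P hφ
  refine ⟨fun ω => (f (lexMin (C ω))).2, (continuous_snd.comp hf).measurable.comp
    (measurable_lexMin hC), ?_⟩
  rintro ω ⟨_, ⟨u, rfl⟩, hu⟩
  have hmem : (f (lexMin (C ω))).1 = φ ω :=
    lexMin_mem (isClosed_eq (continuous_fst.comp hf) continuous_const) ⟨u, hu⟩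
  exact ⟨lexMin (C ω), Prod.ext hmem rfl⟩

/-- **Measurable section theorem on `ℝ⁺`.** Let `(Ω, F, P)` be a complete probability space
and `A` a measurable subset of `Ω × ℝ⁺` for the product σ-field.  Then there is an
`F`-measurable random variable `T : Ω → [0,∞]` whose graph is contained in `A` (on
`{T < ∞}`) and such that `{T < ∞} = π_Ω(A)`. -/
theorem measurable_section_real
    {Ω : Type*} [MeasurableSpace Ω]
    (P : Measure Ω) [IsProbabilityMeasure P] (hP : P.IsComplete)
    (A : Set (Ω × ℝ≥0)) (hA : MeasurableSet A) :
    ∃ T : Ω → ℝ≥0∞, Measurable T ∧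
      (∀ ω, T ω < ⊤ → (ω, (T ω).toNNReal) ∈ A) ∧
      {ω | T ω < ⊤} = Prod.fst '' A := by
  classical
  have := hP
  have : PolishSpace (ℕ → Bool) := {}
  obtain ⟨φ, hφ, A', hA', rfl⟩ := hA.exists_eq_preimage_prodMap_cantor
  obtain ⟨τ, hτ, hτA⟩ := hA'.analyticSet.exists_measurable_selection P hφ
  let E := φ ⁻¹' (Prod.fst '' A')
  have hE : MeasurableSet E :=
    (hA'.analyticSet.image_of_continuous continuous_fst).measurableSet_preimage P hφ
  have hproj : Prod.fst '' (Prod.map φ id ⁻¹' A') = E := by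
    ext ω
    simp [E]
  refine ⟨E.piecewise (fun ω => τ ω) fun _ => ⊤,
    (measurable_coe_nnreal_ennreal.comp hτ).piecewise hE measurable_const, fun ω hω => ?_, ?_⟩
  · by_cases h : ω ∈ E
    · simpa [h] using hτA ω h
    · simp [h] at hω
  · ext ω
    by_cases h : ω ∈ E <;> simp [h, hproj]
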